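/- A symmetric tensor of even order m is a P_0 tensor if and only if it is positive semi-definite, i.e., A x^m >= 0 for all x in R^n. -/

import Mathlib

/-!
Since `A x^{m+1} = ∑ᵢ xᵢ (A x^m)ᵢ`, nonnegativity of `A x^{m+1}` forces some term with `xᵢ ≠ 0`
to be nonnegative. Conversely, if `A x^{m+1}` takes a negative value, it attains a negative minimum
`μ` on the unit sphere at some `z`. For symmetric `A` the gradient of `A x^{m+1}` is
`(m + 1) A x^m`, so the Lagrange multiplier rule makes `z` an eigenvector: `(A z^m)ᵢ = μ zᵢ`.
Then `zᵢ (A z^m)ᵢ = μ zᵢ² < 0` whenever `zᵢ ≠ 0`, and `A` is not P₀.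
-/

open Finset

noncomputable section

/-- The contraction `(A x^{m})_i` of an order-`m+1` tensor with `m` copies of `x`. -/
def contrT {m n : ℕ} (A : (Fin (m+1) → Fin n) → ℝ) (x : Fin n → ℝ) (i : Fin n) : ℝ :=
  ∑ f : Fin m → Fin n, A (Fin.cons i f) * ∏ k, x (f k)

/-- `A x^M` for an order-`M` tensor. -/
def polyT {M n : ℕ} (A : (Fin M → Fin n) → ℝ) (x : Fin n → ℝ) : ℝ :=
  ∑ f : Fin M → Fin n, A f * ∏ k, x (f k)

/-- P tensor: for every nonzero `x`, `max_i x_i (A x^{m-1})_i > 0`. -/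
def IsPTensor {m n : ℕ} (A : (Fin (m+1) → Fin n) → ℝ) : Prop :=
  ∀ x : Fin n → ℝ, x ≠ 0 → ∃ i : Fin n, 0 < x i * contrT A x i

/-- P₀ tensor: for every nonzero `x` there is `i` with `x i ≠ 0` and `x_i (A x^{m-1})_i ≥ 0`. -/
def IsP0Tensor {m n : ℕ} (A : (Fin (m+1) → Fin n) → ℝ) : Prop :=
  ∀ x : Fin n → ℝ, x ≠ 0 → ∃ i : Fin n, x i ≠ 0 ∧ 0 ≤ x i * contrT A x i

def infNorm {n : ℕ} (x : Fin n → ℝ) : ℝ := ⨆ i, |x i|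

/-- The operator `T_A(x) = ‖x‖₂^{2-m} A x^{m-1}` (order of the tensor is `m+1`). -/
def TA {m n : ℕ} (A : (Fin (m+1) → Fin n) → ℝ) (x : Fin n → ℝ) (i : Fin n) : ℝ :=
  if x = 0 then 0
  else (Real.sqrt (∑ j, x j ^ 2)) ^ ((2 : ℤ) - ((m : ℤ) + 1)) * contrT A x i

/-- `α(T_A) = min_{‖x‖_∞ = 1} max_i x_i (T_A(x))_i`. -/
def alphaT {m n : ℕ} (A : (Fin (m+1) → Fin n) → ℝ) : ℝ :=
  sInf ((fun x => ⨆ i, x i * TA A x i) '' {x : Fin n → ℝ | infNorm x = 1})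

/-- B tensor of order `m+1`. -/
def IsBTensor {m n : ℕ} (B : (Fin (m+1) → Fin n) → ℝ) : Prop :=
  ∀ i : Fin n, (0 < ∑ f : Fin m → Fin n, B (Fin.cons i f)) ∧
    ∀ g : Fin m → Fin n, g ≠ (fun _ => i) →
      B (Fin.cons i g) < (1 / (n : ℝ) ^ m) * ∑ f : Fin m → Fin n, B (Fin.cons i f)

/-- B₀ tensor of order `m+1`. -/
def IsB0Tensor {m n : ℕ} (B : (Fin (m+1) → Fin n) → ℝ) : Prop :=
  ∀ i : Fin n, (0 ≤ ∑ f : Fin m → Fin n, B (Fin.cons i f)) ∧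
    ∀ g : Fin m → Fin n, g ≠ (fun _ => i) →
      B (Fin.cons i g) ≤ (1 / (n : ℝ) ^ m) * ∑ f : Fin m → Fin n, B (Fin.cons i f)


section Tuples

variable {m : ℕ} {α M : Type*} [AddCommMonoid M]

theorem Fintype.sum_insertNth [Fintype α] (k : Fin (m + 1)) (F : (Fin (m + 1) → α) → M) :
    ∑ f, F f = ∑ i, ∑ g : Fin m → α, F (k.insertNth i g) := by
  rw [← Fintype.sum_prod_type']
  exact (Fintype.sum_equiv (Fin.insertNthEquiv (fun _ => α) k) _ _ fun _ => rfl).symm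

theorem Finset.prod_univ_erase_eq_prod_succAbove {N : Type*} [CommMonoid N]
    (h : Fin (m + 1) → N) (k : Fin (m + 1)) :
    ∏ j ∈ univ.erase k, h j = ∏ l, h (k.succAbove l) := by
  rw [Fin.univ_succAbove m k, Finset.erase_cons, Finset.prod_map]
  rfl

end Tuples

section Tensor

variable {m n : ℕ} (A : (Fin (m + 1) → Fin n) → ℝ)

theorem polyT_eq_sum_mul_contrT (x : Fin n → ℝ) : polyT A x = ∑ i, x i * contrT A x i := by
  simp only [polyT, contrT, Fintype.sum_insertNth 0, Fin.insertNth_zero', Fin.prod_univ_succ,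
    Fin.cons_zero, Fin.cons_succ, mul_sum]
  exact sum_congr rfl fun i _ => sum_congr rfl fun g _ => by ring

theorem polyT_smul (t : ℝ) (x : Fin n → ℝ) : polyT A (t • x) = t ^ (m + 1) * polyT A x := by
  simp only [polyT, mul_sum, Pi.smul_apply, smul_eq_mul, prod_mul_distrib, prod_const,
    card_univ, Fintype.card_fin]
  exact sum_congr rfl fun f _ => by ring

theorem isP0Tensor_of_polyT_nonneg (h : ∀ x, 0 ≤ polyT A x) : IsP0Tensor A := by
  intro x hx
  by_contra! hneg
  obtain ⟨i, hi⟩ := Function.ne_iff.mp hx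
  have : polyT A x < 0 := by
    rw [polyT_eq_sum_mul_contrT]
    refine sum_neg' (fun j _ => ?_) ⟨i, mem_univ i, hneg i hi⟩
    by_cases hj : x j = 0
    · simp [hj]
    · exact (hneg j hj).le
  exact (h x).not_gt this

variable {A}

-- `x` is contracted into every slot but the `k`-th and `y` into that one; by symmetry,
-- `k` does not matter.
theorem sum_mul_prod_erase_mul_eq_sum_contrT
    (hsym : ∀ (σ : Equiv.Perm (Fin (m + 1))) (f : Fin (m + 1) → Fin n), A (f ∘ σ) = A f)
    (x y : Fin n → ℝ) (k : Fin (m + 1)) :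
    ∑ f, A f * ((∏ j ∈ univ.erase k, x (f j)) * y (f k)) = ∑ i, contrT A x i * y i := by
  have hA : ∀ i g, A (k.insertNth i g) = A (Fin.cons i g) := fun i g => by
    rw [← Fin.insertNth_comp_cycleRange_symm, hsym]
  simp only [Fintype.sum_insertNth k, prod_univ_erase_eq_prod_succAbove, hA,
    Fin.insertNth_apply_same, Fin.insertNth_apply_succAbove, contrT, sum_mul]
  exact sum_congr rfl fun i _ => sum_congr rfl fun g _ => by ring

end Tensor

section Calculus

open ContinuousLinearMap

variable {m n : ℕ} {A : (Fin (m + 1) → Fin n) → ℝ}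

theorem hasStrictFDerivAt_polyT
    (hsym : ∀ (σ : Equiv.Perm (Fin (m + 1))) (f : Fin (m + 1) → Fin n), A (f ∘ σ) = A f)
    (x : Fin n → ℝ) :
    HasStrictFDerivAt (polyT A)
      (((m : ℝ) + 1) • ∑ i, contrT A x i • proj (R := ℝ) (φ := fun _ : Fin n => ℝ) i) x := by
  have hprod : HasStrictFDerivAt (polyT A)
      (∑ f, A f • ∑ k, (∏ j ∈ univ.erase k, x (f j)) •
        proj (R := ℝ) (φ := fun _ : Fin n => ℝ) (f k)) x :=
    .fun_sum fun f _ => (HasStrictFDerivAt.finsetProd fun k _ =>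
      hasStrictFDerivAt_apply (f k) x).const_mul (A f)
  refine hprod.congr_fderiv (ext fun y => ?_)
  simp only [_root_.sum_apply, smul_apply, proj_apply, smul_eq_mul, mul_sum]
  rw [sum_comm]
  simp only [← mul_sum, sum_mul_prod_erase_mul_eq_sum_contrT hsym, sum_const, card_univ,
    Fintype.card_fin, nsmul_eq_mul]
  push_cast
  ring

theorem hasStrictFDerivAt_sum_sq (x : Fin n → ℝ) :
    HasStrictFDerivAt (fun x : Fin n → ℝ => ∑ j, x j ^ 2)
      (∑ j, (2 * x j) • proj (R := ℝ) (φ := fun _ : Fin n => ℝ) j) x :=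
  .fun_sum fun j _ => by
    simpa using (hasStrictFDerivAt_apply (𝕜 := ℝ) (F' := fun _ : Fin n => ℝ) j x).pow 2

end Calculus

section Sphere

variable {m n : ℕ}

theorem isCompact_sum_sq_eq_one : IsCompact {x : Fin n → ℝ | ∑ j, x j ^ 2 = 1} := by
  refine (isCompact_closedBall 0 1).of_isClosed_subset
    (isClosed_eq (by fun_prop) continuous_const) fun x (hx : ∑ j, x j ^ 2 = 1) => ?_
  rw [mem_closedBall_zero_iff, pi_norm_le_iff_of_nonneg zero_le_one]
  intro j
  rw [Real.norm_eq_abs, ← sq_le_one_iff_abs_le_one, ← hx]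
  exact single_le_sum (f := fun j => x j ^ 2) (fun j _ => sq_nonneg _) (mem_univ j)

theorem exists_pos_sum_sq_smul_eq_one {x : Fin n → ℝ} (hx : x ≠ 0) :
    ∃ c : ℝ, 0 < c ∧ ∑ j, (c • x) j ^ 2 = 1 := by
  have hpos : 0 < ∑ j, x j ^ 2 := by
    obtain ⟨j, hj⟩ := Function.ne_iff.mp hx
    exact sum_pos' (fun j _ => sq_nonneg _) ⟨j, mem_univ j, sq_pos_of_ne_zero hj⟩
  refine ⟨(√(∑ j, x j ^ 2))⁻¹, by positivity, ?_⟩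
  simp only [Pi.smul_apply, smul_eq_mul, mul_pow, ← mul_sum, inv_pow, Real.sq_sqrt hpos.le]
  exact inv_mul_cancel₀ hpos.ne'

variable {A : (Fin (m + 1) → Fin n) → ℝ}

theorem contrT_eq_polyT_mul_of_isMinOn
    (hsym : ∀ (σ : Equiv.Perm (Fin (m + 1))) (f : Fin (m + 1) → Fin n), A (f ∘ σ) = A f)
    {z : Fin n → ℝ} (hz : ∑ j, z j ^ 2 = 1)
    (hmin : IsMinOn (polyT A) {x | ∑ j, x j ^ 2 = 1} z) (i : Fin n) :
    contrT A z i = polyT A z * z i := by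
  have hextr : IsLocalExtrOn (polyT A) {x | ∑ j, x j ^ 2 = ∑ j, z j ^ 2} z := by
    rw [hz]
    exact .inl hmin.localize
  obtain ⟨a, b, hab, hsum⟩ := hextr.exists_multipliers_of_hasStrictFDerivAt_1d
    (hasStrictFDerivAt_sum_sq z) (hasStrictFDerivAt_polyT hsym z)
  have hcoord : ∀ i, a * (2 * z i) + b * (((m : ℝ) + 1) * contrT A z i) = 0 := fun i => by
    simpa [Pi.single_apply] using DFunLike.congr_fun hsum (Pi.single i 1)
  have hcontr : 2 * a + b * (((m : ℝ) + 1) * polyT A z) = 0 := by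
    calc 2 * a + b * (((m : ℝ) + 1) * polyT A z)
        = ∑ i, z i * (a * (2 * z i) + b * (((m : ℝ) + 1) * contrT A z i)) := by
          have h2a : 2 * a = 2 * a * ∑ j, z j ^ 2 := by rw [hz, mul_one]
          rw [h2a, polyT_eq_sum_mul_contrT, mul_sum, mul_sum, mul_sum, ← sum_add_distrib]
          exact sum_congr rfl fun i _ => by ring
      _ = 0 := sum_eq_zero fun i _ => by rw [hcoord i, mul_zero]
  have hb : b ≠ 0 := by
    rintro rfl
    have ha : a = 0 := by linarith
    exact hab (by simp [ha])
  have hm : ((m : ℝ) + 1) ≠ 0 := by positivity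
  apply mul_left_cancel₀ (mul_ne_zero hb hm)
  linear_combination hcoord i - z i * hcontr

end Sphere

theorem polyT_nonneg_of_isP0Tensor {m n : ℕ} {A : (Fin (m + 1) → Fin n) → ℝ}
    (hsym : ∀ (σ : Equiv.Perm (Fin (m + 1))) (f : Fin (m + 1) → Fin n), A (f ∘ σ) = A f)
    (hA : IsP0Tensor A) (x : Fin n → ℝ) : 0 ≤ polyT A x := by
  by_contra! hx
  have hx0 : x ≠ 0 := by
    rintro rfl
    simp [polyT] at hx
  obtain ⟨c, hc, hcx⟩ := exists_pos_sum_sq_smul_eq_one hx0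
  obtain ⟨z, hz, hmin⟩ := isCompact_sum_sq_eq_one.exists_isMinOn ⟨c • x, hcx⟩
    (show Continuous (polyT A) by unfold polyT; fun_prop).continuousOn
  have hneg : polyT A z < 0 := by
    calc polyT A z ≤ polyT A (c • x) := isMinOn_iff.mp hmin _ hcx
      _ < 0 := by rw [polyT_smul]; exact mul_neg_of_pos_of_neg (by positivity) hx
  have hz0 : z ≠ 0 := by
    rintro rfl
    simp at hz
  obtain ⟨i, hzi, hi⟩ := hA z hz0
  rw [contrT_eq_polyT_mul_of_isMinOn hsym hz hmin i] at hi
  nlinarith [sq_pos_of_ne_zero hzi]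

theorem stmt9_general (m n : ℕ)
    (A : (Fin (m+1) → Fin n) → ℝ)
    (hsym : ∀ (σ : Equiv.Perm (Fin (m+1))) (f : Fin (m+1) → Fin n), A (f ∘ σ) = A f) :
    IsP0Tensor A ↔ ∀ x : Fin n → ℝ, 0 ≤ polyT A x :=
  ⟨polyT_nonneg_of_isP0Tensor hsym, isP0Tensor_of_polyT_nonneg A⟩

theorem stmt9 (m n : ℕ) (hm : Even (m + 1))
    (A : (Fin (m+1) → Fin n) → ℝ)
    (hsym : ∀ (σ : Equiv.Perm (Fin (m+1))) (f : Fin (m+1) → Fin n), A (f ∘ σ) = A f) :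
    IsP0Tensor A ↔ ∀ x : Fin n → ℝ, 0 ≤ polyT A x :=
  stmt9_general m n A hsym
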